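/- arXiv:2208.12912 — 2 statements merged into one kernel-verified Lean document; each statement's English description precedes it below -/
import Mathlib

section
/- Let Q be a convex polyhedron with a polygonal section P (so P = Q ∩ {z = 0} and π⁻¹(∂P) ∩ Q = ∂P, where π is projection to the xy-plane and ∂P is the boundary of P in the plane). Then every vertex of Q not lying in P lies in the interior of π⁻¹(P), and consequently π(Q) = P. -/
open Matrix

/-- Rotation by angle `θ` about the unit axis `a` (Rodrigues' formula). -/
noncomputable def rot3 (a : Fin 3 → ℝ) (θ : ℝ) (x : Fin 3 → ℝ) : Fin 3 → ℝ :=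
  Real.cos θ • x + Real.sin θ • (crossProduct a x) + ((1 - Real.cos θ) * (a ⬝ᵥ x)) • a

/-- Orthogonal projection onto the xy-plane, viewed as a map to `ℝ²`. -/
def proj2 (x : Fin 3 → ℝ) : Fin 2 → ℝ := ![x 0, x 1]

/-- Orthogonal projection `(x,y,z) ↦ (x,y,0)` of `ℝ³` onto the xy-plane. -/
def proj3 (x : Fin 3 → ℝ) : Fin 3 → ℝ := ![x 0, x 1, 0]

/-- `X ⊆ ℝ³` is locally Rupert: Rupert rotations of arbitrarily small angle exist. -/
noncomputable def IsLocallyRupert (X : Set (Fin 3 → ℝ)) : Prop :=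
  ∀ ε > 0, ∃ (a : Fin 3 → ℝ) (θ : ℝ), a ⬝ᵥ a = 1 ∧ |θ| < ε ∧
    proj2 '' (rot3 a θ '' X) ⊆ interior (proj2 '' X)

/-- `X ⊆ ℝ³` is locally reverse Rupert. -/
noncomputable def IsLocallyReverseRupert (X : Set (Fin 3 → ℝ)) : Prop :=
  ∀ ε > 0, ∃ (a : Fin 3 → ℝ) (θ : ℝ), a ⬝ᵥ a = 1 ∧ |θ| < ε ∧
    proj2 '' X ⊆ interior (proj2 '' (rot3 a θ '' X))

/-- proj2 as a linear map. -/
def proj2L : (Fin 3 → ℝ) →ₗ[ℝ] (Fin 2 → ℝ) where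
  toFun := proj2
  map_add' x y := by funext i; fin_cases i <;> simp [proj2]
  map_smul' c x := by funext i; fin_cases i <;> simp [proj2]

lemma proj2_continuous : Continuous proj2 := by
  apply continuous_pi
  intro i
  fin_cases i <;> simp only [proj2] <;>
    [exact (continuous_apply 0).congr (fun x => rfl);
     exact (continuous_apply 1).congr (fun x => rfl)]

/-- A preconnected set containing a point of the interior of `A` and a point
outside the closure of `A` must meet the frontier of `A`. -/
lemma preconnected_crosses_frontier {X : Type*} [TopologicalSpace X] {s A : Set X}
    (hs : IsPreconnected s) {a b : X} (ha : a ∈ s) (hai : a ∈ interior A)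
    (hb : b ∈ s) (hbn : b ∉ closure A) : ∃ x ∈ s, x ∈ frontier A := by
  by_contra h
  push_neg at h
  have hsub : s ⊆ interior A ∪ (closure A)ᶜ := by
    intro x hx
    by_cases hc : x ∈ closure A
    · left
      by_contra hint
      exact h x hx ⟨hc, hint⟩
    · right; exact hc
  obtain ⟨x, _, hx1, hx2⟩ := hs (interior A) (closure A)ᶜ isOpen_interior
    isClosed_closure.isOpen_compl hsub ⟨a, ha, hai⟩ ⟨b, hb, hbn⟩
  exact hx2 (subset_closure (interior_subset hx1))

/-- for a polygonal section `P` of `Q`, every vertex of `Q` not in `P`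
lies in the interior of `π⁻¹(P)`, and `π(Q) = P`. -/
theorem polygonal_section_vertices (V : Finset (Fin 3 → ℝ))
    (Q P : Set (Fin 3 → ℝ))
    (hQ : Q = convexHull ℝ (V : Set (Fin 3 → ℝ)))
    (hext : ∀ v ∈ V, v ∈ Set.extremePoints ℝ Q)
    -- P is the intersection of Q with the xy-plane:
    (hP : P = Q ∩ {x | x 2 = 0})
    -- P is a genuine (2-dimensional) convex polygon:
    (hPint : (interior (proj2 '' P)).Nonempty)
    -- π⁻¹(∂P) ∩ Q = ∂P, where ∂P is the boundary of P within the plane: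
    (hsec : Q ∩ proj2 ⁻¹' (frontier (proj2 '' P))
          = P ∩ proj2 ⁻¹' (frontier (proj2 '' P))) :
    (∀ v ∈ V, v ∉ P → v ∈ interior (proj2 ⁻¹' (proj2 '' P))) ∧
      proj2 '' Q = proj2 '' P := by
  set K : Set (Fin 2 → ℝ) := proj2 '' P with hK
  have hQconv : Convex ℝ Q := hQ ▸ convex_convexHull ℝ _
  have hPQ : P ⊆ Q := hP ▸ Set.inter_subset_left
  -- an interior point of K coming from P
  obtain ⟨y0, hy0⟩ := hPint
  obtain ⟨x0, hx0P, hx0y⟩ := (interior_subset hy0 : y0 ∈ K)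
  have hx0Q : x0 ∈ Q := hPQ hx0P
  have hx02 : x0 2 = 0 := (hP ▸ hx0P).2
  -- key claim
  have key : ∀ v ∈ V, v ∉ P → proj2 v ∈ interior K := by
    intro v hv hvP
    have hvQ : v ∈ Q := hQ ▸ subset_convexHull ℝ _ hv
    have hv2 : v 2 ≠ 0 := fun h => hvP (hP ▸ ⟨hvQ, h⟩)
    by_contra hni
    by_cases hcl : proj2 v ∈ closure K
    · -- then proj2 v ∈ frontier K, so v ∈ P by hsec
      have hfr : proj2 v ∈ frontier K := ⟨hcl, hni⟩
      have : v ∈ P ∩ proj2 ⁻¹' (frontier K) := hsec ▸ ⟨hvQ, hfr⟩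
      exact hvP this.1
    · -- segment from proj2 x0 to proj2 v crosses frontier K
      obtain ⟨y, hyseg, hyfr⟩ := preconnected_crosses_frontier
        (convex_segment (proj2 x0) (proj2 v)).isPreconnected
        (left_mem_segment ℝ _ _) (hx0y ▸ hy0)
        (right_mem_segment ℝ _ _) hcl
      obtain ⟨t, u, ht, hu, htu, hy⟩ := hyseg
      set w : Fin 3 → ℝ := t • x0 + u • v with hw
      have hwQ : w ∈ Q := hQconv hx0Q hvQ ht hu htu
      have hproj : proj2 w = y := by
        rw [← hy]
        show proj2L (t • x0 + u • v) = _
        rw [map_add, _root_.map_smul, _root_.map_smul]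
        rfl
      have hwmem : w ∈ Q ∩ proj2 ⁻¹' (frontier K) :=
        ⟨hwQ, show proj2 w ∈ frontier K from hproj ▸ hyfr⟩
      rw [hsec] at hwmem
      have hwP : w ∈ P := hwmem.1
      have hw2 : w 2 = 0 := (hP ▸ hwP).2
      have huv : u * v 2 = 0 := by
        have : t * x0 2 + u * v 2 = 0 := hw2
        rwa [hx02, mul_zero, zero_add] at this
      have hu0 : u = 0 := by
        rcases mul_eq_zero.mp huv with h | h
        · exact h
        · exact absurd h hv2
      have ht1 : t = 1 := by linarith
      have : y = proj2 x0 := by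
        rw [← hproj, hw, hu0, ht1, zero_smul, add_zero, one_smul]
      rw [this, hx0y] at hyfr
      exact hyfr.2 hy0
  constructor
  · intro v hv hvP
    have hmem : v ∈ proj2 ⁻¹' (interior K) := key v hv hvP
    exact interior_maximal (Set.preimage_mono interior_subset)
      (isOpen_interior.preimage proj2_continuous) hmem
  · apply Set.Subset.antisymm
    · -- proj2 '' Q ⊆ K via convexHull_min
      have hKconv : Convex ℝ K := by
        have : Convex ℝ P := hP ▸ hQconv.inter (by
          intro x hx y hy a b ha hb hab
          simp only [Set.mem_setOf_eq] at *
          show a * x 2 + b * y 2 = 0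
          rw [hx, hy, mul_zero, mul_zero, add_zero])
        exact this.linear_image proj2L
      have hsub : Q ⊆ proj2 ⁻¹' K := by
        rw [hQ]
        apply convexHull_min
        · intro v hv
          by_cases hvP : v ∈ P
          · exact Set.mem_image_of_mem _ hvP
          · exact Set.mem_preimage.mpr (interior_subset (key v hv hvP))
        · exact hKconv.linear_preimage proj2L
      exact Set.image_subset_iff.mpr hsub
    · exact Set.image_mono hPQ
end

section
/- Let v ∈ S² be a unit vector on the equator (z = 0), v' = −v its antipode, and R the great circle through v, v' and the poles. Let φ be rotation by π about the z-axis, and fix δ. Define F = {a ∈ S² : ρ_a^δ(v) ∈ R} and F' = {a ∈ S² : ρ_a^δ(v') ∈ R}. Then φ(F) = F and F = F'. -/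
open Matrix

def ph (x : Fin 3 → ℝ) : Fin 3 → ℝ := ![-x 0, -x 1, x 2]

lemma phi_eq (x : Fin 3 → ℝ) : rot3 ![0,0,1] Real.pi x = ph x := by
  funext i
  fin_cases i <;>
    simp [rot3, ph, cross_apply, dotProduct, Fin.sum_univ_three, vecHead, vecTail,
      Pi.smul_apply, Pi.add_apply, smul_eq_mul] <;> ring

lemma ph_ph (x : Fin 3 → ℝ) : ph (ph x) = x := by
  funext i; fin_cases i <;> simp [ph]

lemma ph_dot (x y : Fin 3 → ℝ) : ph x ⬝ᵥ ph y = x ⬝ᵥ y := by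
  simp [ph, dotProduct, Fin.sum_univ_three]

lemma conj (a : Fin 3 → ℝ) (θ : ℝ) (x : Fin 3 → ℝ) :
    rot3 (ph a) θ (ph x) = ph (rot3 a θ x) := by
  funext i
  fin_cases i <;>
    simp [rot3, ph, cross_apply, dotProduct, Fin.sum_univ_three, vecHead, vecTail,
      Pi.smul_apply, Pi.add_apply, smul_eq_mul] <;> ring

lemma rot3_neg (a : Fin 3 → ℝ) (θ : ℝ) (x : Fin 3 → ℝ) :
    rot3 a θ (-x) = -(rot3 a θ x) := by
  funext i
  simp [rot3, cross_apply, dotProduct, Fin.sum_univ_three, vecHead, vecTail,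
    Pi.smul_apply, Pi.add_apply, Pi.neg_apply, smul_eq_mul]
  fin_cases i <;> simp [vecHead, vecTail] <;> ring

lemma cross_eq (v : Fin 3 → ℝ) (hveq : v 2 = 0) :
    crossProduct v ![0,0,1] = ![v 1, -v 0, 0] := by
  funext i
  fin_cases i <;> simp [cross_apply, hveq, vecHead, vecTail]

lemma dot_ph (v : Fin 3 → ℝ) (hveq : v 2 = 0) (x : Fin 3 → ℝ) :
    crossProduct v ![0,0,1] ⬝ᵥ ph x = -(crossProduct v ![0,0,1] ⬝ᵥ x) := by
  simp [cross_eq v hveq, ph, dotProduct, Fin.sum_univ_three, vecHead, vecTail]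
  ring

/-- let `v` be a unit vector on the equator, `v' = -v`, `R` the great
circle through `v`, `v'` and the poles, and `φ` the rotation by `π` about the z-axis.
With `F = {a ∈ S² : ρ_a^δ(v) ∈ R}` and `F' = {a ∈ S² : ρ_a^δ(v') ∈ R}`, we have
`φ(F) = F` and `F = F'`. -/
theorem F_symmetric (v : Fin 3 → ℝ) (hv : v ⬝ᵥ v = 1) (hveq : v 2 = 0) (δ : ℝ)
    (R F F' : Set (Fin 3 → ℝ))
    -- R is the great circle in the plane spanned by v and the z-axis:
    (hR : R = {x : Fin 3 → ℝ | x ⬝ᵥ x = 1 ∧ (crossProduct v ![0, 0, 1]) ⬝ᵥ x = 0})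
    (hF : F = {a : Fin 3 → ℝ | a ⬝ᵥ a = 1 ∧ rot3 a δ v ∈ R})
    (hF' : F' = {a : Fin 3 → ℝ | a ⬝ᵥ a = 1 ∧ rot3 a δ (-v) ∈ R}) :
    (rot3 ![0, 0, 1] Real.pi) '' F = F ∧ F = F' := by
  have hphv : ph v = -v := by
    funext i; fin_cases i <;> simp [ph, hveq]
  have hphnv : ph (-v) = v := by rw [← hphv, ph_ph]
  have hRneg : ∀ x, -x ∈ R ↔ x ∈ R := by
    intro x
    rw [hR]
    simp only [Set.mem_setOf_eq, dotProduct_neg, neg_dotProduct, neg_neg, neg_eq_zero]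
  have hRph : ∀ x, ph x ∈ R ↔ x ∈ R := by
    intro x
    rw [hR]
    simp only [Set.mem_setOf_eq, ph_dot, dot_ph v hveq, neg_eq_zero]
  have key : ∀ a, rot3 (ph a) δ v ∈ R ↔ rot3 a δ v ∈ R := by
    intro a
    have h1 : rot3 (ph a) δ v = ph (-(rot3 a δ v)) := by
      conv_lhs => rw [← hphnv]
      rw [conj, rot3_neg]
    rw [h1, hRph, hRneg]
  have hFph : ∀ a, ph a ∈ F ↔ a ∈ F := by
    intro a
    rw [hF]
    simp only [Set.mem_setOf_eq, ph_dot, key]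
  constructor
  · have hphi : rot3 ![0, 0, 1] Real.pi = ph := funext phi_eq
    rw [hphi]
    ext x
    constructor
    · rintro ⟨b, hb, rfl⟩
      exact (hFph b).mpr hb
    · intro hx
      exact ⟨ph x, (hFph x).mpr hx, ph_ph x⟩
  · rw [hF, hF']
    ext a
    simp only [Set.mem_setOf_eq, rot3_neg, hRneg]
end
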